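/- arXiv:1411.7687 — 5 statements merged into one kernel-verified Lean document; each statement's English description precedes it below -/
import Mathlib

section
/- If a closed set A ⊆ ℝ^d is r-convex (i.e., A equals the intersection of complements of all open balls of radius r disjoint from A), then for every 0 < r* ≤ r, A is also r*-convex. -/
/-!
Every point outside `A` lies in an open `r`-ball missing `A`. Sliding the centre of that ball
towards the point along the segment joining them, with ratio `r* / r`, yields an `r*`-ball that
still contains the point and sits inside the `r`-ball, so it misses `A` too. Hence the
`r*`-hull is contained in the `r`-hull, which is `A`.
-/

/-- The `r`-convex hull of `A`: intersection of complements of all open balls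
of radius `r` disjoint from `A`. -/
def rHull {d : ℕ} (r : ℝ) (A : Set (EuclideanSpace ℝ (Fin d))) :
    Set (EuclideanSpace ℝ (Fin d)) :=
  ⋂ x ∈ {x : EuclideanSpace ℝ (Fin d) | Metric.ball x r ∩ A = ∅}, (Metric.ball x r)ᶜ

open Metric AffineMap

theorem exists_mem_ball_subset_ball_of_le {E : Type*} [SeminormedAddCommGroup E]
    [NormedSpace ℝ E] {x y : E} {r r' : ℝ} (hx : x ∈ ball y r) (hr' : 0 < r') (hle : r' ≤ r) :
    ∃ z, x ∈ ball z r' ∧ ball z r' ⊆ ball y r := by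
  rw [mem_ball] at hx
  have hr : 0 < r := dist_nonneg.trans_lt hx
  set t := r' / r
  have ht : t * r = r' := div_mul_cancel₀ r' hr.ne'
  have ht0 : 0 < t := div_pos hr' hr
  have ht1 : t ≤ 1 := div_le_one_of_le₀ hle hr.le
  refine ⟨lineMap x y t, ?_, ball_subset_ball' ?_⟩
  · rw [mem_ball', dist_lineMap_left, Real.norm_of_nonneg ht0.le]
    calc t * dist x y < t * r := by gcongr
      _ = r' := ht
  · rw [dist_lineMap_right, Real.norm_of_nonneg (sub_nonneg.2 ht1)]
    calc r' + (1 - t) * dist x y ≤ r' + (1 - t) * r := by gcongr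
      _ = r := by linarith

section

variable {d : ℕ} {A : Set (EuclideanSpace ℝ (Fin d))}

theorem mem_rHull_iff {r : ℝ} {x : EuclideanSpace ℝ (Fin d)} :
    x ∈ rHull r A ↔ ∀ y, ball y r ∩ A = ∅ → x ∉ ball y r := by
  simp only [rHull, Set.mem_iInter, Set.mem_compl_iff, Set.mem_ofPred_eq]

theorem subset_rHull (r : ℝ) : A ⊆ rHull r A := fun a ha =>
  mem_rHull_iff.2 fun _ hy hay => Set.eq_empty_iff_forall_notMem.1 hy a ⟨hay, ha⟩

theorem rHull_subset_rHull_of_le {r r' : ℝ} (hr' : 0 < r') (hle : r' ≤ r) :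
    rHull r' A ⊆ rHull r A := by
  intro x hx
  refine mem_rHull_iff.2 fun y hy hxy => ?_
  obtain ⟨z, hxz, hzy⟩ := exists_mem_ball_subset_ball_of_le hxy hr' hle
  have hz : ball z r' ∩ A = ∅ := Set.subset_empty_iff.1 (hy ▸ Set.inter_subset_inter_left A hzy)
  exact mem_rHull_iff.1 hx z hz hxz

end

theorem rconvex_of_smaller_radius_general {d : ℕ} {A : Set (EuclideanSpace ℝ (Fin d))}
    {r : ℝ} (hconv : A = rHull r A)
    {r' : ℝ} (hr' : 0 < r') (hle : r' ≤ r) :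
    A = rHull r' A :=
  (subset_rHull r').antisymm ((rHull_subset_rHull_of_le hr' hle).trans hconv.symm.subset)

/-- If a closed set `A ⊆ ℝ^d` is `r`-convex, then it is `r*`-convex for every
`0 < r* ≤ r`. -/
theorem rconvex_of_smaller_radius {d : ℕ} {A : Set (EuclideanSpace ℝ (Fin d))}
    (hA : IsClosed A) {r : ℝ} (hr : 0 < r) (hconv : A = rHull r A)
    {r' : ℝ} (hr' : 0 < r') (hle : r' ≤ r) :
    A = rHull r' A :=
  rconvex_of_smaller_radius_general hconv hr' hle
end

section
/- Let A ⊆ ℝ^d be a nonempty closed set such that a ball of radius λ > 0 rolls freely in A. Then the interior of the closure of the complement of A equals the complement of A: int(cl(Aᶜ)) = Aᶜ. -/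
/-- A ball of radius `ρ` rolls freely in `A`: each boundary point of `A` lies in a
closed ball of radius `ρ` contained in `A`. -/
def RollsFreely {d : ℕ} (ρ : ℝ) (A : Set (EuclideanSpace ℝ (Fin d))) : Prop :=
  ∀ a ∈ frontier A, ∃ x, a ∈ Metric.closedBall x ρ ∧ Metric.closedBall x ρ ⊆ A

/-- If a ball of radius `λ > 0` rolls freely in a nonempty closed set `A`, then
`int(cl(Aᶜ)) = Aᶜ`. -/
theorem interior_closure_compl_eq {d : ℕ} {A : Set (EuclideanSpace ℝ (Fin d))}
    (hne : A.Nonempty) (hcl : IsClosed A) {l : ℝ} (hl : 0 < l)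
    (hroll : RollsFreely l A) :
    interior (closure Aᶜ) = Aᶜ := by
  apply Set.Subset.antisymm
  · intro x hx
    by_contra hxA
    rw [Set.notMem_compl_iff] at hxA
    have hxcl : x ∈ closure Aᶜ := interior_subset hx
    have hxni : x ∉ interior A := by
      rwa [closure_compl, Set.mem_compl_iff] at hxcl
    have hfr : x ∈ frontier A := by
      rw [frontier_eq_closure_inter_closure]
      exact ⟨subset_closure hxA, hxcl⟩
    obtain ⟨c, hxc, hball⟩ := hroll x hfr
    have hballint : Metric.ball c l ⊆ interior A :=
      interior_maximal (fun y hy => hball (Metric.ball_subset_closedBall hy))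
        Metric.isOpen_ball
    have hdist : dist x c = l := by
      refine le_antisymm (Metric.mem_closedBall.mp hxc) ?_
      by_contra h
      push_neg at h
      exact hxni (hballint (Metric.mem_ball.mpr h))
    obtain ⟨ε, hε, hεsub⟩ := Metric.isOpen_iff.mp isOpen_interior x hx
    have hεsub' : Metric.ball x ε ⊆ closure Aᶜ :=
      fun y hy => interior_subset (hεsub hy)
    set t : ℝ := min (ε / (2 * l)) (1 / 2) with ht
    have ht0 : 0 < t := lt_min (div_pos hε (by linarith)) (by norm_num)
    have ht1 : t < 1 := lt_of_le_of_lt (min_le_right _ _) (by norm_num)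
    set y : EuclideanSpace ℝ (Fin d) := x + t • (c - x) with hy
    have hyx : dist y x = t * l := by
      rw [dist_eq_norm]
      have : y - x = t • (c - x) := by rw [hy]; abel
      rw [this, norm_smul, Real.norm_eq_abs, abs_of_pos ht0, ← dist_eq_norm,
        dist_comm c x, hdist]
    have hyc : dist y c = (1 - t) * l := by
      rw [dist_eq_norm]
      have : y - c = (1 - t) • (x - c) := by
        rw [hy]; module
      rw [this, norm_smul, Real.norm_eq_abs, abs_of_pos (by linarith), ← dist_eq_norm,
        hdist]
    have hy1 : y ∈ interior A := by
      apply hballint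
      rw [Metric.mem_ball, hyc]
      nlinarith
    have hy2 : y ∈ closure Aᶜ := by
      apply hεsub'
      rw [Metric.mem_ball, hyx]
      have : t ≤ ε / (2 * l) := min_le_left _ _
      calc t * l ≤ (ε / (2 * l)) * l := by nlinarith
        _ < ε := by rw [div_mul_eq_mul_div]; rw [div_lt_iff₀ (by linarith)]; nlinarith
    rw [closure_compl] at hy2
    exact hy2 hy1
  · exact interior_maximal subset_closure hcl.isOpen_compl
end

section
/- Let A ⊆ ℝ^d be a nonempty closed set such that a ball of radius λ > 0 rolls freely in A. Then the boundary of A equals the boundary of the closure of the complement of A: ∂A = ∂(cl(Aᶜ)). -/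
/-- If a ball of radius `λ > 0` rolls freely in a nonempty closed set `A`, then
`∂A = ∂(cl(Aᶜ))`. -/
theorem frontier_eq_frontier_closure_compl {d : ℕ}
    {A : Set (EuclideanSpace ℝ (Fin d))}
    (hne : A.Nonempty) (hcl : IsClosed A) {l : ℝ} (hl : 0 < l)
    (hroll : RollsFreely l A) :
    frontier A = frontier (closure Aᶜ) := by
  apply Set.Subset.antisymm
  · intro a ha
    obtain ⟨x, hax, hsub⟩ := hroll a ha
    have hball : Metric.ball x l ⊆ interior A :=
      interior_maximal (Metric.ball_subset_closedBall.trans hsub) Metric.isOpen_ball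
    have hacl : a ∈ closure (interior A) := by
      rw [← closure_ball x hl.ne'] at hax
      exact closure_mono hball hax
    have h1 : a ∈ closure (closure Aᶜ) := by
      rw [frontier_eq_closure_inter_closure] at ha
      exact subset_closure ha.2
    have h2 : a ∉ interior (closure Aᶜ) := by
      rw [closure_compl, interior_compl]
      simpa using hacl
    rw [frontier]
    exact ⟨h1, h2⟩
  · calc frontier (closure Aᶜ) ⊆ frontier Aᶜ := frontier_closure_subset
      _ = frontier A := frontier_compl A
end

section
/- Let G ⊆ ℝ^d be a closed set satisfying (R_λ^r): a closed ball of radius λ rolls freely in G and a closed ball of radius r rolls freely in cl(Gᶜ). Then for each boundary point x ∈ ∂G there exists a unit vector η(x) such that B_λ(x − λη(x)) ⊆ G and B_r(x + rη(x)) ⊆ cl(Gᶜ). -/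
/-!
The inner ball `B_λ(y)` lies in `int G` and the outer ball `B_r(z)` in `cl(Gᶜ) = (int G)ᶜ`, so
they are disjoint and `λ + r ≤ |y - z|`. Both closed balls contain `x`, so equality holds in the
triangle inequality `|y - z| ≤ |y - x| + |x - z| ≤ λ + r`; by strict convexity `x` lies on the
segment `[y, z]` at distances `λ` and `r` from its ends, and `η = (z - y) / (λ + r)` is the normal.
-/

open Metric

section NormedSpace

variable {E : Type*} [NormedAddCommGroup E] [NormedSpace ℝ E]

theorem mem_frontier_closure_compl_of_closedBall_subset {s : Set E} {x y : E} {l : ℝ}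
    (hx : x ∈ frontier s) (hl : l ≠ 0) (hxy : x ∈ closedBall y l) (hys : closedBall y l ⊆ s) :
    x ∈ frontier (closure sᶜ) := by
  have hball : ball y l ⊆ interior s :=
    interior_maximal (ball_subset_closedBall.trans hys) isOpen_ball
  have hx_closure : x ∈ closure (interior s) :=
    closure_mono hball (by rwa [closure_ball y hl])
  rw [closure_compl, frontier_compl, frontier, interior_interior]
  exact ⟨hx_closure, hx.2⟩

theorem exists_unit_eq_sub_smul_eq_add_smul_of_add_le_dist [StrictConvexSpace ℝ E]
    {x y z : E} {l r : ℝ} (hlr : 0 < l + r) (hxy : x ∈ closedBall y l)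
    (hxz : x ∈ closedBall z r) (hyz : l + r ≤ dist y z) :
    ∃ η : E, ‖η‖ = 1 ∧ y = x - l • η ∧ z = x + r • η := by
  rw [mem_closedBall] at hxy hxz
  have htri := dist_triangle y x z
  rw [dist_comm y x] at htri
  have hyz_eq : dist y z = l + r := by linarith
  have hyx_eq : dist y x = l := by rw [dist_comm]; linarith
  have hxz_eq : dist x z = r := by linarith
  have hx : x = AffineMap.lineMap y z (l / (l + r)) := by
    apply eq_lineMap_of_dist_eq_mul_of_dist_eq_mul
    · rw [hyx_eq, hyz_eq]; field_simp
    · rw [hxz_eq, hyz_eq]; field_simp; ring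
  set η := (l + r)⁻¹ • (z - y) with hη
  have hz : z = y + (l + r) • η := by
    rw [hη, smul_inv_smul₀ hlr.ne']; abel
  have hx' : x = y + l • η := by
    rw [hx, AffineMap.lineMap_apply_module, hη]; module
  refine ⟨η, ?_, by rw [hx']; abel, by rw [hz, hx']; module⟩
  rw [hη, norm_smul, ← dist_eq_norm', hyz_eq, norm_inv, Real.norm_of_nonneg hlr.le,
    inv_mul_cancel₀ hlr.ne']

end NormedSpace

theorem exists_unit_normal_general {d : ℕ} {G : Set (EuclideanSpace ℝ (Fin d))}
    {l r : ℝ} (hl : 0 < l) (hr : 0 < r)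
    (hroll₁ : RollsFreely l G) (hroll₂ : RollsFreely r (closure Gᶜ)) :
    ∀ x ∈ frontier G, ∃ η : EuclideanSpace ℝ (Fin d), ‖η‖ = 1 ∧
      Metric.ball (x - l • η) l ⊆ G ∧ Metric.ball (x + r • η) r ⊆ closure Gᶜ := by
  intro x hx
  obtain ⟨y, hxy, hyG⟩ := hroll₁ x hx
  obtain ⟨z, hxz, hzG⟩ :=
    hroll₂ x (mem_frontier_closure_compl_of_closedBall_subset hx hl.ne' hxy hyG)
  have hdisj : Disjoint (ball y l) (ball z r) := by
    refine Disjoint.mono (interior_maximal (ball_subset_closedBall.trans hyG) isOpen_ball)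
      (ball_subset_closedBall.trans hzG) ?_
    rw [closure_compl]
    exact disjoint_compl_right
  obtain ⟨η, hη, rfl, rfl⟩ := exists_unit_eq_sub_smul_eq_add_smul_of_add_le_dist
    (add_pos hl hr) hxy hxz ((disjoint_ball_ball_iff hl hr).mp hdisj)
  exact ⟨η, hη, ball_subset_closedBall.trans hyG, ball_subset_closedBall.trans hzG⟩

/-- Under (R_λ^r), for each boundary point `x ∈ ∂G` there is a unit vector `η`
with `B_λ(x − λη) ⊆ G` and `B_r(x + rη) ⊆ cl(Gᶜ)`. -/
theorem exists_unit_normal {d : ℕ} {G : Set (EuclideanSpace ℝ (Fin d))}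
    (hcl : IsClosed G) {l r : ℝ} (hl : 0 < l) (hr : 0 < r)
    (hroll₁ : RollsFreely l G) (hroll₂ : RollsFreely r (closure Gᶜ)) :
    ∀ x ∈ frontier G, ∃ η : EuclideanSpace ℝ (Fin d), ‖η‖ = 1 ∧
      Metric.ball (x - l • η) l ⊆ G ∧ Metric.ball (x + r • η) r ⊆ closure Gᶜ :=
  exists_unit_normal_general hl hr hroll₁ hroll₂
end

section
/- Let A, B, X ⊆ ℝ^d with A ⊆ X ⊕ B_δ[0] for some δ > 0, and let r > r' > 0 with r − r' ≥ δ. Then (A ⊕ B_{r'}[0]) ⊖ B_{r'}[0] ⊖ B_{r−r'}[0] ⊆ (X ⊕ B_r[0]) ⊖ B_r[0]; in particular C_{r'}(A) ⊖ B_{r−r'}[0] ⊆ C_r(X). -/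
open Pointwise

/-- Minkowski erosion. -/
def erode {d : ℕ} (C D : Set (EuclideanSpace ℝ (Fin d))) :
    Set (EuclideanSpace ℝ (Fin d)) :=
  {x | ∀ y ∈ D, x + y ∈ C}

/-- Ball closing (the `ρ`-convex hull as a morphological closing). -/
def closing {d : ℕ} (ρ : ℝ) (S : Set (EuclideanSpace ℝ (Fin d))) :
    Set (EuclideanSpace ℝ (Fin d)) :=
  erode (S + Metric.closedBall (0 : EuclideanSpace ℝ (Fin d)) ρ)
    (Metric.closedBall (0 : EuclideanSpace ℝ (Fin d)) ρ)

/-!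
Eroding twice is eroding by the Minkowski sum, and `B_{r'} ⊕ B_{r−r'} = B_r`, so the left-hand
side is `(A ⊕ B_{r'}) ⊖ B_r`; it lies in `(X ⊕ B_r) ⊖ B_r` because
`A ⊕ B_{r'} ⊆ X ⊕ B_{δ+r'} ⊆ X ⊕ B_r`.
-/

open Metric Set

section Erosion

variable {d : ℕ}

theorem erode_erode (C D E : Set (EuclideanSpace ℝ (Fin d))) :
    erode (erode C D) E = erode C (D + E) := by
  ext x
  constructor
  · rintro h _ ⟨y, hy, z, hz, rfl⟩
    have := h z hz y hy
    rwa [add_right_comm, add_assoc] at this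
  · intro h z hz y hy
    rw [add_right_comm, add_assoc]
    exact h (y + z) (add_mem_add hy hz)

theorem erode_mono_left {C C' : Set (EuclideanSpace ℝ (Fin d))} (h : C ⊆ C')
    (D : Set (EuclideanSpace ℝ (Fin d))) : erode C D ⊆ erode C' D :=
  fun _ hx y hy => h (hx y hy)

end Erosion

/-- If `A ⊆ X ⊕ B_δ[0]` and `r > r' > 0` with `r − r' ≥ δ`, then
`C_{r'}(A) ⊖ B_{r−r'}[0] ⊆ C_r(X)`. -/
theorem closing_erosion_subset {d : ℕ} {A X : Set (EuclideanSpace ℝ (Fin d))}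
    {δ r r' : ℝ} (hδ : 0 < δ) (hr' : 0 < r') (hrr' : r' < r) (hge : δ ≤ r - r')
    (hAX : A ⊆ X + Metric.closedBall (0 : EuclideanSpace ℝ (Fin d)) δ) :
    erode (closing r' A) (Metric.closedBall (0 : EuclideanSpace ℝ (Fin d)) (r - r'))
      ⊆ closing r X := by
  have hA : A + closedBall 0 r' ⊆ X + closedBall (0 : EuclideanSpace ℝ (Fin d)) r :=
    calc A + closedBall (0 : EuclideanSpace ℝ (Fin d)) r'
        ⊆ X + closedBall 0 δ + closedBall 0 r' := add_subset_add_right hAX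
      _ = X + closedBall 0 (δ + r') := by
        rw [add_assoc, closedBall_add_closedBall hδ.le hr'.le, zero_add]
      _ ⊆ X + closedBall 0 r := add_subset_add_left (closedBall_subset_closedBall (by linarith))
  calc erode (closing r' A) (closedBall 0 (r - r'))
      = erode (A + closedBall 0 r') (closedBall 0 r' + closedBall 0 (r - r')) := erode_erode ..
    _ = erode (A + closedBall 0 r') (closedBall 0 r) := by
        rw [closedBall_add_closedBall hr'.le (sub_nonneg.2 hrr'.le), zero_add, add_sub_cancel]
    _ ⊆ closing r X := erode_mono_left hA _
end
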